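/- Let z_k, z_n ∈ D∖{0} with |z_k| ≤ |z_n| and suppose the arcs 2M₀·I(z_k) and M₀·I(z_n) are disjoint (M₀ ≥ 1). Then for every e^{it} ∈ I(z_k), |e^{it} − z_n| ≥ C₁|1 − z_n \overline{z_k}| for a constant C₁ = C₁(M₀) > 0; consequently, for every measurable G ⊂ M₀ I(z_k), ω(z_n, G) ≤ C₁^{−2} M₀ (1−|z_n|²)(1−|z_k|²)/|1 − z_n\overline{z_k}|² ≤ C·2^{−β(z_n,z_k)} with C depending only on M₀. -/

import Mathlib

open MeasureTheory

/-- The open unit disc in the complex plane. -/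
def unitDisc : Set ℂ := Metric.ball 0 1

/-- The pseudohyperbolic distance ρ(z,w) = |(z-w)/(1 - conj w * z)|. -/
noncomputable def pseudoDist (z w : ℂ) : ℝ :=
  ‖(z - w) / (1 - (starRingEnd ℂ) w * z)‖

/-- The base-2 hyperbolic distance β(z,w) = log₂((1+ρ)/(1-ρ)). -/
noncomputable def hypDist (z w : ℂ) : ℝ :=
  Real.logb 2 ((1 + pseudoDist z w) / (1 - pseudoDist z w))

/-- Harmonic measure from `z ∈ D` of a set of boundary points described by
their angles `t ∈ A ⊆ ℝ`: `ω(z,A) = (1/2π) ∫_A (1-|z|²)/|e^{it}-z|² dt`. -/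
noncomputable def hMeasure (z : ℂ) (A : Set ℝ) : ℝ :=
  (1 / (2 * Real.pi)) *
    ∫ t in A, (1 - ‖z‖ ^ 2) /
      ‖Complex.exp ((t : ℂ) * Complex.I) - z‖ ^ 2

/-- The arc `C·I(z) = {e^{it} : |t - Arg z| ≤ π C (1-|z|)}` as a subset of
the unit circle. -/
def arcI (C : ℝ) (z : ℂ) : Set ℂ :=
  {ξ : ℂ | ‖ξ‖ = 1 ∧ ∃ t : ℝ,
    |t - Complex.arg z| ≤ Real.pi * C * (1 - ‖z‖) ∧
    ξ = Complex.exp ((t : ℂ) * Complex.I)}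

lemma abs_exp_mI_sub_one (x : ℝ) :
    ‖Complex.exp ((x:ℂ) * Complex.I) - 1‖ = 2 * |Real.sin (x / 2)| := by
  have h : Complex.exp ((x:ℂ) * Complex.I) - 1
      = Complex.ofReal (Real.cos x - 1) + Complex.ofReal (Real.sin x) * Complex.I := by
    rw [Complex.exp_mul_I, ← Complex.ofReal_cos, ← Complex.ofReal_sin]
    push_cast
    ring
  rw [h, Complex.norm_def, Complex.normSq_add_mul_I]
  have h2 : (Real.cos x - 1) ^ 2 + Real.sin x ^ 2 = (2 * |Real.sin (x / 2)|) ^ 2 := by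
    have hs := Real.sin_sq_add_cos_sq x
    have hh : Real.sin (x / 2) ^ 2 = 1 / 2 - Real.cos (2 * (x / 2)) / 2 :=
      Real.sin_sq_eq_half_sub _
    rw [show 2 * (x / 2) = x by ring] at hh
    rw [mul_pow, sq_abs]
    nlinarith [hh, hs]
  rw [h2, Real.sqrt_sq (by positivity)]

lemma abs_exp_sub_exp (t u : ℝ) :
    ‖Complex.exp ((t:ℂ) * Complex.I) - Complex.exp ((u:ℂ) * Complex.I)‖
      = 2 * |Real.sin ((t - u) / 2)| := by
  have h : Complex.exp ((t:ℂ) * Complex.I) - Complex.exp ((u:ℂ) * Complex.I)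
      = Complex.exp ((u:ℂ) * Complex.I) * (Complex.exp (((t - u : ℝ):ℂ) * Complex.I) - 1) := by
    rw [mul_sub, ← Complex.exp_add, mul_one]
    push_cast
    ring_nf
  rw [h, norm_mul, Complex.norm_exp_ofReal_mul_I, one_mul, abs_exp_mI_sub_one]

lemma sin_abs_eq {y : ℝ} (hy : |y| ≤ Real.pi) : Real.sin |y| = |Real.sin y| := by
  rcases le_or_gt 0 y with h | h
  · rw [abs_of_nonneg h, abs_of_nonneg (Real.sin_nonneg_of_nonneg_of_le_pi h
      (le_trans (le_abs_self y) hy))]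
  · rw [abs_of_neg h, Real.sin_neg, abs_of_nonpos]
    exact Real.sin_nonpos_of_nonpos_of_neg_pi_le (le_of_lt h)
      (by rw [abs_of_neg h] at hy; linarith)

lemma abs_exp_sub_exp_le (t u : ℝ) :
    ‖Complex.exp ((t:ℂ) * Complex.I) - Complex.exp ((u:ℂ) * Complex.I)‖ ≤ |t - u| := by
  rw [abs_exp_sub_exp]
  calc 2 * |Real.sin ((t - u) / 2)| ≤ 2 * |(t - u) / 2| := by
        have := Real.abs_sin_le_abs (x := (t - u) / 2)
        linarith
    _ = |t - u| := by rw [abs_div]; simp [abs_of_nonneg]; ring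

lemma le_abs_exp_sub_exp {t u : ℝ} (h : |t - u| ≤ Real.pi) :
    2 / Real.pi * |t - u| ≤
    ‖Complex.exp ((t:ℂ) * Complex.I) - Complex.exp ((u:ℂ) * Complex.I)‖ := by
  rw [abs_exp_sub_exp]
  have h1 : |(t - u) / 2| ≤ Real.pi / 2 := by rw [abs_div]; simp [abs_of_nonneg]; linarith
  have h2 := Real.mul_le_sin (abs_nonneg ((t - u) / 2)) h1
  rw [sin_abs_eq (le_trans h1 (by linarith [Real.pi_pos]))] at h2
  have h3 : |(t - u) / 2| = |t - u| / 2 := by rw [abs_div]; simp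
  rw [h3] at h2
  linarith

lemma normSq_identity (z w : ℂ) :
    Complex.normSq (1 - (starRingEnd ℂ) w * z) - Complex.normSq (z - w)
      = (1 - Complex.normSq z) * (1 - Complex.normSq w) := by
  simp only [Complex.normSq_apply, Complex.sub_re, Complex.sub_im, Complex.mul_re,
    Complex.mul_im, Complex.one_re, Complex.one_im, Complex.conj_re, Complex.conj_im]
  ring

set_option maxHeartbeats 1000000 in
/-- If `|z_k| ≤ |z_n|` and the arcs `2M₀·I(z_k)` and `M₀·I(z_n)` are disjoint,
then `|e^{it} - z_n| ≥ C₁ |1 - z_n conj(z_k)|` for `e^{it} ∈ I(z_k)`, and for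
every measurable `G ⊆ M₀ I(z_k)` one has
`ω(z_n,G) ≤ C₁⁻² M₀ (1-|z_n|²)(1-|z_k|²)/|1-z_n conj(z_k)|² ≤ C 2^{-β(z_n,z_k)}`. -/
theorem disjoint_arcs_harmonic_measure (M₀ : ℝ) (hM₀ : 1 ≤ M₀) :
    ∃ C₁ C : ℝ, 0 < C₁ ∧ 0 < C ∧ ∀ zk zn : ℂ, zk ∈ unitDisc → zn ∈ unitDisc →
      zk ≠ 0 → zn ≠ 0 → ‖zk‖ ≤ ‖zn‖ →
      Disjoint (arcI (2 * M₀) zk) (arcI M₀ zn) →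
      ((∀ t : ℝ, |t - Complex.arg zk| ≤ Real.pi * (1 - ‖zk‖) →
        C₁ * ‖1 - zn * (starRingEnd ℂ) zk‖ ≤
          ‖Complex.exp ((t : ℂ) * Complex.I) - zn‖) ∧
      ∀ G : Set ℝ, MeasurableSet G →
        G ⊆ Set.Ioc (Complex.arg zk - Real.pi) (Complex.arg zk + Real.pi) ∩
          {t : ℝ | |t - Complex.arg zk| ≤ Real.pi * M₀ * (1 - ‖zk‖)} →
        hMeasure zn G ≤ C₁⁻¹ ^ 2 * M₀ *
            ((1 - ‖zn‖ ^ 2) * (1 - ‖zk‖ ^ 2) /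
              ‖1 - zn * (starRingEnd ℂ) zk‖ ^ 2) ∧
          hMeasure zn G ≤ C * (2:ℝ) ^ (-(hypDist zn zk))) := by
  have hpi := Real.pi_pos
  refine ⟨(Real.pi + 2)⁻¹, 4 * (Real.pi + 2) ^ 2 * M₀, by positivity, by positivity, ?_⟩
  intro zk zn hzk hzn hzk0 hzn0 hrs hdisj
  set a := Complex.arg zk with ha
  set b := Complex.arg zn with hb
  set s := ‖zk‖ with hs
  set r := ‖zn‖ with hr
  have hs0 : 0 < s := norm_pos_iff.mpr hzk0
  have hr0 : 0 < r := norm_pos_iff.mpr hzn0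
  have hs1 : s < 1 := by
    simpa [hs] using mem_ball_zero_iff.mp hzk
  have hr1 : r < 1 := by
    simpa [hr] using mem_ball_zero_iff.mp hzn
  -- key separation estimate
  have key : ∀ t : ℝ, |t - a| ≤ Real.pi * M₀ * (1 - s) →
      M₀ * (1 - s) ≤ ‖Complex.exp ((t:ℂ) * Complex.I) - zn‖ := by
    intro t ht
    set t'' := toIocMod Real.two_pi_pos (t - Real.pi) b with ht''def
    have hmem := toIocMod_mem_Ioc Real.two_pi_pos (t - Real.pi) b
    rw [Set.mem_Ioc] at hmem
    have habs : |t - t''| ≤ Real.pi := by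
      rw [abs_le]; constructor <;> [skip; skip] <;> nlinarith [hmem.1, hmem.2]
    have hexp : Complex.exp ((t'':ℂ) * Complex.I) = Complex.exp ((b:ℂ) * Complex.I) := by
      have hdiv := self_sub_toIocMod Real.two_pi_pos (t - Real.pi) b
      rw [← ht''def, zsmul_eq_mul] at hdiv
      have : (b:ℂ) = (t'':ℂ) + (toIocDiv Real.two_pi_pos (t - Real.pi) b : ℂ) * (2 * Real.pi) := by
        have : b = t'' + (toIocDiv Real.two_pi_pos (t - Real.pi) b : ℝ) * (2 * Real.pi) := by
          linarith [hdiv]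
        exact_mod_cast congrArg (Complex.ofReal) this
      rw [this, add_mul, Complex.exp_add,
        show ((toIocDiv Real.two_pi_pos (t - Real.pi) b : ℂ)) * (2 * (Real.pi:ℂ)) * Complex.I
          = ((toIocDiv Real.two_pi_pos (t - Real.pi) b : ℂ)) * (2 * (Real.pi:ℂ) * Complex.I) by ring,
        Complex.exp_int_mul_two_pi_mul_I, mul_one]
    have hsep : Real.pi * (2 * M₀) * (1 - s) < |t'' - a| := by
      by_contra hcon
      push_neg at hcon
      have h1 : Complex.exp ((t'':ℂ) * Complex.I) ∈ arcI (2 * M₀) zk :=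
        ⟨Complex.norm_exp_ofReal_mul_I _, t'', hcon, rfl⟩
      have h2 : Complex.exp ((t'':ℂ) * Complex.I) ∈ arcI M₀ zn := by
        rw [hexp]
        refine ⟨Complex.norm_exp_ofReal_mul_I _, b, ?_, rfl⟩
        rw [← hb, sub_self, abs_zero]
        show (0:ℝ) ≤ Real.pi * M₀ * (1 - r)
        exact mul_nonneg (mul_nonneg hpi.le (by linarith)) (by linarith)
      exact Set.disjoint_left.mp hdisj h1 h2
    have htri : |t'' - a| ≤ |t - t''| + |t - a| := by
      calc |t'' - a| = |(t - a) - (t - t'')| := by ring_nf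
        _ ≤ |t - a| + |t - t''| := abs_sub _ _
        _ = |t - t''| + |t - a| := by ring
    have hd : Real.pi * M₀ * (1 - s) < |t - t''| := by nlinarith
    have hchord : 2 * M₀ * (1 - s) <
        ‖Complex.exp ((t:ℂ) * Complex.I) - Complex.exp ((b:ℂ) * Complex.I)‖ := by
      rw [← hexp]
      have hlow := le_abs_exp_sub_exp habs
      have : 2 / Real.pi * (Real.pi * M₀ * (1 - s)) < 2 / Real.pi * |t - t''| := by
        apply mul_lt_mul_of_pos_left hd (by positivity)
      calc 2 * M₀ * (1 - s) = 2 / Real.pi * (Real.pi * M₀ * (1 - s)) := by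
            field_simp
        _ < 2 / Real.pi * |t - t''| := this
        _ ≤ _ := hlow
    have hbzn : ‖Complex.exp ((b:ℂ) * Complex.I) - zn‖ = 1 - r := by
      have hzn' := Complex.norm_mul_exp_arg_mul_I zn
      rw [← hb, ← hr] at hzn'
      have : Complex.exp ((b:ℂ) * Complex.I) - zn
          = ((1 - r : ℝ) : ℂ) * Complex.exp ((b:ℂ) * Complex.I) := by
        rw [← hzn']; push_cast; ring
      rw [this, norm_mul, Complex.norm_exp_ofReal_mul_I, mul_one, Complex.norm_real, Real.norm_eq_abs,
        abs_of_nonneg (by linarith)]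
    have htri2 : ‖Complex.exp ((t:ℂ) * Complex.I) - Complex.exp ((b:ℂ) * Complex.I)‖
        ≤ ‖Complex.exp ((t:ℂ) * Complex.I) - zn‖
          + ‖Complex.exp ((b:ℂ) * Complex.I) - zn‖ := by
      calc ‖Complex.exp ((t:ℂ) * Complex.I) - Complex.exp ((b:ℂ) * Complex.I)‖
          ≤ ‖Complex.exp ((t:ℂ) * Complex.I) - zn‖
            + ‖zn - Complex.exp ((b:ℂ) * Complex.I)‖ :=
            norm_sub_le_norm_sub_add_norm_sub _ _ _
        _ = _ := by rw [norm_sub_rev zn]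
    rw [hbzn] at htri2
    nlinarith [hrs]
  -- Claim A
  have claimA : ∀ t : ℝ, |t - a| ≤ Real.pi * M₀ * (1 - s) →
      (Real.pi + 2)⁻¹ * ‖1 - zn * (starRingEnd ℂ) zk‖ ≤
        ‖Complex.exp ((t:ℂ) * Complex.I) - zn‖ := by
    intro t ht
    have hk := key t ht
    set E := Complex.exp ((t:ℂ) * Complex.I) with hE
    have hEabs : ‖E‖ = 1 := Complex.norm_exp_ofReal_mul_I _
    have h1 : ‖1 - zn * (starRingEnd ℂ) zk‖
        ≤ ‖1 - E * (starRingEnd ℂ) zk‖ + ‖E - zn‖ := by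
      have heq : 1 - zn * (starRingEnd ℂ) zk
          = (1 - E * (starRingEnd ℂ) zk) + (E - zn) * (starRingEnd ℂ) zk := by ring
      rw [heq]
      calc ‖(1 - E * (starRingEnd ℂ) zk) + (E - zn) * (starRingEnd ℂ) zk‖
          ≤ ‖1 - E * (starRingEnd ℂ) zk‖
            + ‖(E - zn) * (starRingEnd ℂ) zk‖ := norm_add_le _ _
        _ = ‖1 - E * (starRingEnd ℂ) zk‖ + ‖E - zn‖ * s := by
            rw [norm_mul, Complex.norm_conj, ← hs]
        _ ≤ _ := by nlinarith [norm_nonneg (E - zn), hs1]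
    have h2 : ‖1 - E * (starRingEnd ℂ) zk‖ ≤ |t - a| + (1 - s) := by
      have hzk' := Complex.norm_mul_exp_arg_mul_I zk
      rw [← ha, ← hs] at hzk'
      have hconj : (starRingEnd ℂ) zk = (s:ℂ) * Complex.exp ((-a : ℝ) * Complex.I) := by
        rw [← hzk', map_mul, Complex.conj_ofReal, ← Complex.exp_conj]
        push_cast
        simp [map_mul, Complex.conj_ofReal, Complex.conj_I]
      have hEkey : E * (starRingEnd ℂ) zk = (s:ℂ) * Complex.exp (((t - a : ℝ):ℂ) * Complex.I) := by
        rw [hconj, hE, ← mul_assoc, mul_comm (Complex.exp _) ((s:ℂ)), mul_assoc,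
          ← Complex.exp_add]
        push_cast
        ring_nf
      have hsplit : 1 - E * (starRingEnd ℂ) zk
          = (1 - Complex.exp (((t - a : ℝ):ℂ) * Complex.I))
            + ((1 - s : ℝ):ℂ) * Complex.exp (((t - a : ℝ):ℂ) * Complex.I) := by
        rw [hEkey]; push_cast; ring
      rw [hsplit]
      calc ‖_‖ ≤ ‖1 - Complex.exp (((t - a : ℝ):ℂ) * Complex.I)‖
            + ‖((1 - s : ℝ):ℂ) * Complex.exp (((t - a : ℝ):ℂ) * Complex.I)‖ :=
            norm_add_le _ _
        _ ≤ |t - a| + (1 - s) := by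
            have e1 : ‖1 - Complex.exp (((t - a : ℝ):ℂ) * Complex.I)‖ ≤ |t - a| := by
              rw [norm_sub_rev]
              have := abs_exp_sub_exp_le (t - a) 0
              simpa using this
            have e2 : ‖((1 - s : ℝ):ℂ) * Complex.exp (((t - a : ℝ):ℂ) * Complex.I)‖
                = 1 - s := by
              rw [norm_mul, Complex.norm_exp_ofReal_mul_I, mul_one, Complex.norm_real, Real.norm_eq_abs,
                abs_of_nonneg (by linarith)]
            linarith
    have hta : |t - a| + (1 - s) ≤ (Real.pi + 1) * (M₀ * (1 - s)) := by nlinarith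
    have hm : ‖1 - zn * (starRingEnd ℂ) zk‖ ≤ (Real.pi + 2) * ‖E - zn‖ := by
      nlinarith [hk, h1, h2, hta,
        mul_le_mul_of_nonneg_left hk (by positivity : (0:ℝ) ≤ Real.pi + 1)]
    rw [inv_mul_le_iff₀ (by positivity)]
    linarith [hm]
  constructor
  · intro t ht
    refine claimA t (le_trans ht ?_)
    nlinarith [mul_nonneg (mul_pos hpi (by linarith : (0:ℝ) < 1 - s)).le
      (by linarith : (0:ℝ) ≤ M₀ - 1)]
  · intro G hGmeas hGsub
    set m := ‖1 - zn * (starRingEnd ℂ) zk‖ with hmdef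
    have hm0 : 0 < m := by
      rw [hmdef]
      apply norm_pos_iff.mpr
      intro hcontra
      rw [sub_eq_zero] at hcontra
      have h1 : ‖zn * (starRingEnd ℂ) zk‖ = 1 := by rw [← hcontra]; simp
      rw [norm_mul, Complex.norm_conj, ← hr, ← hs] at h1
      nlinarith
    set c : ℝ := (Real.pi + 2)⁻¹ with hcdef
    have hc0 : 0 < c := by positivity
    set L := Real.pi * M₀ * (1 - s) with hLdef
    have hL0 : 0 < L := by
      rw [hLdef]; exact mul_pos (mul_pos hpi (by linarith)) (by linarith)
    have hr2 : 0 < 1 - r ^ 2 := by nlinarith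
    set K := (1 - r ^ 2) / (c * m) ^ 2 with hKdef
    have hK0 : 0 ≤ K := by
      rw [hKdef]; exact div_nonneg (by linarith) (by positivity)
    have hbound : ∀ t ∈ G, ‖(1 - ‖zn‖ ^ 2) /
        ‖Complex.exp ((t:ℂ) * Complex.I) - zn‖ ^ 2‖ ≤ K := by
      intro t htG
      obtain ⟨-, ht2⟩ := hGsub htG
      have hA := claimA t ht2
      have hpos : 0 < c * m := by positivity
      have hsq : (c * m) ^ 2 ≤ ‖Complex.exp ((t:ℂ) * Complex.I) - zn‖ ^ 2 :=
        pow_le_pow_left₀ hpos.le hA 2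
      have hnn : (0:ℝ) ≤ (1 - ‖zn‖ ^ 2) /
          ‖Complex.exp ((t:ℂ) * Complex.I) - zn‖ ^ 2 :=
        div_nonneg (by rw [← hr]; linarith) (by positivity)
      rw [Real.norm_of_nonneg hnn, hKdef, ← hr]
      exact div_le_div_of_nonneg_left (by linarith) (by positivity) hsq
    have hGsub' : G ⊆ Set.Icc (a - L) (a + L) := by
      intro t htG
      obtain ⟨-, ht2⟩ := hGsub htG
      have ht2' : |t - a| ≤ L := ht2
      rw [abs_le] at ht2'
      exact ⟨by linarith [ht2'.1], by linarith [ht2'.2]⟩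
    have hvol : volume G ≤ ENNReal.ofReal (2 * L) := by
      calc volume G ≤ volume (Set.Icc (a - L) (a + L)) := measure_mono hGsub'
        _ = ENNReal.ofReal (2 * L) := by rw [Real.volume_Icc]; congr 1; ring
    have hfin : volume G < ⊤ := lt_of_le_of_lt hvol ENNReal.ofReal_lt_top
    have hint := norm_setIntegral_le_of_norm_le_const_ae' hfin
      (Filter.Eventually.of_forall hbound)
    have htoReal : (volume G).toReal ≤ 2 * L :=
      ENNReal.toReal_le_of_le_ofReal (by positivity) hvol
    have hμbound : hMeasure zn G ≤ K * M₀ * (1 - s) := by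
      unfold hMeasure
      have h1 : (∫ t in G, (1 - ‖zn‖ ^ 2) /
          ‖Complex.exp ((t:ℂ) * Complex.I) - zn‖ ^ 2)
          ≤ K * (volume G).toReal :=
        le_trans (le_abs_self _) (by rw [← Real.norm_eq_abs]; exact hint)
      calc (1 / (2 * Real.pi)) * ∫ t in G, (1 - ‖zn‖ ^ 2) /
            ‖Complex.exp ((t:ℂ) * Complex.I) - zn‖ ^ 2
          ≤ (1 / (2 * Real.pi)) * (K * (2 * L)) := by
            apply mul_le_mul_of_nonneg_left _ (by positivity)
            exact le_trans h1 (mul_le_mul_of_nonneg_left htoReal hK0)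
        _ = K * M₀ * (1 - s) := by rw [hLdef]; field_simp
    have hfirst : hMeasure zn G ≤
        (Real.pi + 2) ^ 2 * M₀ * ((1 - r ^ 2) * (1 - s ^ 2) / m ^ 2) := by
      calc hMeasure zn G ≤ K * M₀ * (1 - s) := hμbound
        _ = (Real.pi + 2) ^ 2 * M₀ * ((1 - r ^ 2) * (1 - s) / m ^ 2) := by
            rw [hKdef, hcdef]
            field_simp
        _ ≤ _ := by
            apply mul_le_mul_of_nonneg_left _ (by positivity)
            apply div_le_div_of_nonneg_right _ (by positivity)
            nlinarith [mul_nonneg hr2.le (mul_nonneg (by linarith : (0:ℝ) ≤ s)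
              (by linarith : (0:ℝ) ≤ 1 - s))]
    constructor
    · have : ((Real.pi + 2)⁻¹)⁻¹ ^ 2 = (Real.pi + 2) ^ 2 := by rw [inv_inv]
      rw [this]
      exact hfirst
    · clear hbound hμbound hGsub hGsub' key claimA hdisj hvol hfin hint htoReal hGmeas
      set ρ := pseudoDist zn zk with hρdef
      have hρ0 : 0 ≤ ρ := norm_nonneg _
      have hnsq : Complex.normSq (1 - (starRingEnd ℂ) zk * zn) = m ^ 2 := by
        rw [hmdef, ← Complex.sq_norm, mul_comm]
      have hid := normSq_identity zn zk
      rw [← Complex.sq_norm zn, ← Complex.sq_norm zk, hnsq, ← hr, ← hs] at hid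
      have hρsq : ρ ^ 2 = Complex.normSq (zn - zk) / m ^ 2 := by
        rw [hρdef]
        unfold pseudoDist
        rw [norm_div, div_pow, Complex.sq_norm, Complex.sq_norm, hnsq]
      have hone : 1 - ρ ^ 2 = (1 - r ^ 2) * (1 - s ^ 2) / m ^ 2 := by
        rw [hρsq, one_sub_div (pow_ne_zero 2 (ne_of_gt hm0)), hid]
      have hs2 : 0 < 1 - s ^ 2 := by
        have := pow_lt_one₀ hs0.le hs1 two_ne_zero
        linarith
      have hQ0 : 0 < (1 - r ^ 2) * (1 - s ^ 2) / m ^ 2 :=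
        div_pos (mul_pos hr2 hs2) (pow_pos hm0 2)
      have hρ1 : ρ < 1 := by nlinarith [hone, hQ0, hρ0]
      have hpow : (2:ℝ) ^ (-(hypDist zn zk)) = (1 - ρ) / (1 + ρ) := by
        unfold hypDist
        rw [← hρdef, Real.rpow_neg (by norm_num),
          Real.rpow_logb (by norm_num) (by norm_num)
            (by apply div_pos <;> linarith), inv_div]
      rw [hpow]
      have h4 : 1 - ρ ^ 2 ≤ 4 * ((1 - ρ) / (1 + ρ)) := by
        rw [show (4:ℝ) * ((1 - ρ) / (1 + ρ)) = 4 * (1 - ρ) / (1 + ρ) by ring,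
          le_div_iff₀ (by linarith)]
        nlinarith
      calc hMeasure zn G ≤ (Real.pi + 2) ^ 2 * M₀ * ((1 - r ^ 2) * (1 - s ^ 2) / m ^ 2) := hfirst
        _ = (Real.pi + 2) ^ 2 * M₀ * (1 - ρ ^ 2) := by rw [hone]
        _ ≤ (Real.pi + 2) ^ 2 * M₀ * (4 * ((1 - ρ) / (1 + ρ))) :=
            mul_le_mul_of_nonneg_left h4 (by positivity)
        _ = 4 * (Real.pi + 2) ^ 2 * M₀ * ((1 - ρ) / (1 + ρ)) := by ring
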